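/- arXiv:1008.4265 — 3 statements merged into one kernel-verified Lean document; each statement's English description precedes it below -/
import Mathlib

section
/- Let k ≥ 4 be an even integer and let G be a finite graph. Then G contains a perfect k-matching if and only if G contains a perfect 2-matching. -/
/-- A perfect `k`-matching of a simple graph `G` is an assignment `f` of weights in
`{0, 1, ..., k}` to the edges of `G` (non-edges get weight `0`) such that for every vertex `v`,
the sum of the weights of the edges incident with `v` equals `k`. -/
def SimpleGraph.IsPerfectNMatching {V : Type*} (G : SimpleGraph V) (k : ℕ)
    (f : Sym2 V → ℕ) : Prop :=
  (∀ e, f e ≠ 0 → e ∈ G.edgeSet) ∧ (∀ e, f e ≤ k) ∧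
    ∀ v : V, ∑ᶠ e ∈ G.incidenceSet v, f e = k

open Finset

private lemma finsum_incidence {V : Type*} [Fintype V] [DecidableEq V] (G : SimpleGraph V)
    [DecidableRel G.Adj] (f : Sym2 V → ℕ) (v : V) :
    ∑ᶠ e ∈ G.incidenceSet v, f e = ∑ u ∈ G.neighborFinset v, f s(v, u) := by
  have hfin : (G.incidenceSet v).Finite := Set.toFinite _
  have himg : hfin.toFinset = (G.neighborFinset v).image (fun u => s(v, u)) := by
    ext e
    refine Sym2.ind (fun a b => ?_) e
    simp only [Set.Finite.mem_toFinset, SimpleGraph.incidenceSet, Set.mem_sep_iff,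
      SimpleGraph.mem_edgeSet, Sym2.mem_iff, mem_image, SimpleGraph.mem_neighborFinset]
    constructor
    · rintro ⟨hadj, (rfl | rfl)⟩
      · exact ⟨b, hadj, rfl⟩
      · exact ⟨a, hadj.symm, Sym2.eq_swap⟩
    · rintro ⟨u, hadj, h⟩
      rw [Sym2.eq_iff] at h
      rcases h with ⟨rfl, rfl⟩ | ⟨rfl, rfl⟩
      · exact ⟨hadj, Or.inl rfl⟩
      · exact ⟨hadj.symm, Or.inr rfl⟩
  rw [← hfin.coe_toFinset, finsum_mem_coe_finset, himg,
    Finset.sum_image (fun x _ y _ h => Sym2.congr_right.mp h)]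

/-- Let `k ≥ 4` be an even integer and let `G` be a finite graph. Then `G` contains a perfect
`k`-matching if and only if `G` contains a perfect `2`-matching. -/
theorem perfect_k_matching_iff_perfect_two_matching {V : Type*} [Fintype V]
    (G : SimpleGraph V) (k : ℕ) (hk : 4 ≤ k) (hke : Even k) :
    (∃ f, G.IsPerfectNMatching k f) ↔ (∃ f, G.IsPerfectNMatching 2 f) := by
  classical
  constructor
  · rintro ⟨f, hf0, hfk, hfs⟩
    -- Hall condition for the neighbor sets
    have hvs : ∀ v, ∑ u ∈ G.neighborFinset v, f s(v, u) = k := fun v => by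
      rw [← finsum_incidence G f v]; exact hfs v
    have hall : ∀ s : Finset V, #s ≤ #(s.biUnion fun v => G.neighborFinset v) := by
      intro s
      set T := s.biUnion (fun v => G.neighborFinset v) with hT
      have key : ∑ v ∈ s, ∑ u ∈ G.neighborFinset v, f s(v, u)
          ≤ ∑ w ∈ T, ∑ u ∈ G.neighborFinset w, f s(w, u) := by
        rw [Finset.sum_sigma', Finset.sum_sigma']
        have hsub : (s.sigma fun v => G.neighborFinset v).image
            (fun p => (⟨p.2, p.1⟩ : (_ : V) × V)) ⊆ T.sigma fun w => G.neighborFinset w := by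
          intro q hq
          simp only [Finset.mem_image, Finset.mem_sigma, SimpleGraph.mem_neighborFinset] at hq ⊢
          obtain ⟨⟨v, u⟩, ⟨hv, hadj⟩, rfl⟩ := hq
          exact ⟨Finset.mem_biUnion.2 ⟨v, hv, (SimpleGraph.mem_neighborFinset G v u).2 hadj⟩,
            hadj.symm⟩
        calc ∑ p ∈ s.sigma (fun v => G.neighborFinset v), f s(p.1, p.2)
            = ∑ q ∈ (s.sigma fun v => G.neighborFinset v).image
                (fun p => (⟨p.2, p.1⟩ : (_ : V) × V)), f s(q.1, q.2) := by
              rw [Finset.sum_image]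
              · exact Finset.sum_congr rfl fun p _ => by rw [Sym2.eq_swap]
              · intro p _ q _ h
                injection h with h1 h2
                exact Sigma.ext h2 (heq_of_eq h1)
          _ ≤ ∑ q ∈ T.sigma fun w => G.neighborFinset w, f s(q.1, q.2) :=
              Finset.sum_le_sum_of_subset hsub
      have hk0 : 0 < k := by omega
      have : k * #s ≤ k * #T := by
        calc k * #s = ∑ v ∈ s, ∑ u ∈ G.neighborFinset v, f s(v, u) := by
              simp [hvs, mul_comm]
          _ ≤ ∑ w ∈ T, ∑ u ∈ G.neighborFinset w, f s(w, u) := key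
          _ = k * #T := by simp [hvs, mul_comm]
      exact Nat.le_of_mul_le_mul_left this hk0
    obtain ⟨σ, hinj, hmem⟩ :=
      (Finset.all_card_le_biUnion_card_iff_exists_injective (fun v => G.neighborFinset v)).mp hall
    have hadjσ : ∀ v, G.Adj v (σ v) := fun v => (SimpleGraph.mem_neighborFinset G v _).1 (hmem v)
    have hsurj : Function.Surjective σ := Finite.surjective_of_injective hinj
    set F : Sym2 V → ℕ := fun e => ∑ w : V, if s(w, σ w) = e then 1 else 0 with hF
    refine ⟨F, ?_, ?_, ?_⟩
    · intro e he
      obtain ⟨w, hw⟩ := Finset.exists_ne_zero_of_sum_ne_zero he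
      have : s(w, σ w) = e := by by_contra h; simp [h] at hw
      rw [← this]
      exact (hadjσ w)
    · intro e
      refine Sym2.ind (fun a b => ?_) e
      have hle : ∀ w : V, (if s(w, σ w) = s(a, b) then (1:ℕ) else 0)
          ≤ (if w = a then 1 else 0) + (if w = b then 1 else 0) := by
        intro w
        by_cases h : s(w, σ w) = s(a, b)
        · rw [if_pos h, Sym2.eq_iff] at *
          rcases h with ⟨rfl, _⟩ | ⟨rfl, _⟩ <;> simp
        · simp [h]
      calc F s(a, b) ≤ ∑ w : V, ((if w = a then 1 else 0) + (if w = b then 1 else 0)) :=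
            Finset.sum_le_sum fun w _ => hle w
        _ ≤ 2 := by rw [Finset.sum_add_distrib]; simp
    · intro v
      rw [finsum_incidence]
      obtain ⟨w0, hw0⟩ := hsurj v
      have hadjw0 : G.Adj w0 v := hw0 ▸ hadjσ w0
      have hw0v : w0 ≠ v := hadjw0.ne
      have inner : ∀ w : V, (∑ u ∈ G.neighborFinset v, if s(w, σ w) = s(v, u) then (1:ℕ) else 0)
          = if w = v ∨ σ w = v then 1 else 0 := by
        intro w
        by_cases h1 : w = v
        · subst h1
          simp only [Sym2.congr_right, true_or, if_true]
          rw [Finset.sum_ite_eq]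
          simp [hmem w]
        · by_cases h2 : σ w = v
          · rw [if_pos (Or.inr h2)]
            have hcond : ∀ u ∈ G.neighborFinset v,
                (if s(w, σ w) = s(v, u) then (1:ℕ) else 0) = if w = u then 1 else 0 := by
              intro u _
              rw [h2, Sym2.eq_swap]
              simp only [Sym2.congr_right]
            rw [Finset.sum_congr rfl hcond, Finset.sum_ite_eq]
            have hwmem : w ∈ G.neighborFinset v :=
              (SimpleGraph.mem_neighborFinset G v w).2 ((h2 ▸ hadjσ w).symm)
            simp [hwmem]
          · have hcond : ∀ u ∈ G.neighborFinset v, (if s(w, σ w) = s(v, u) then (1:ℕ) else 0) = 0 := by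
              intro u _
              rw [if_neg]
              intro h
              rw [Sym2.eq_iff] at h
              rcases h with ⟨h, _⟩ | ⟨_, h⟩
              · exact h1 h
              · exact h2 h
            rw [Finset.sum_congr rfl hcond]
            simp [h1, h2]
      have hsplit : ∀ w : V, (if w = v ∨ σ w = v then (1:ℕ) else 0)
          = (if w = v then 1 else 0) + (if w = w0 then 1 else 0) := by
        intro w
        by_cases h1 : w = v
        · subst h1
          simp [hw0v.symm, Ne.symm hw0v]
        · by_cases h2 : w = w0
          · subst h2
            simp [h1, hw0]
          · have : σ w ≠ v := fun h => h2 (hinj (h.trans hw0.symm))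
            simp [h1, h2, this]
      calc ∑ u ∈ G.neighborFinset v, F s(v, u)
          = ∑ u ∈ G.neighborFinset v, ∑ w : V, (if s(w, σ w) = s(v, u) then (1:ℕ) else 0) := rfl
        _ = ∑ w : V, ∑ u ∈ G.neighborFinset v, (if s(w, σ w) = s(v, u) then (1:ℕ) else 0) :=
            Finset.sum_comm
        _ = ∑ w : V, if w = v ∨ σ w = v then 1 else 0 := Finset.sum_congr rfl fun w _ => inner w
        _ = ∑ w : V, ((if w = v then 1 else 0) + (if w = w0 then 1 else 0)) :=
            Finset.sum_congr rfl fun w _ => hsplit w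
        _ = 2 := by rw [Finset.sum_add_distrib]; simp
  · rintro ⟨f, hf0, hf2, hfs⟩
    refine ⟨fun e => (k / 2) * f e, fun e he => hf0 e (by intro h; simp [h] at he), fun e => ?_, fun v => ?_⟩
    · calc (k / 2) * f e ≤ (k / 2) * 2 := Nat.mul_le_mul_left _ (hf2 e)
        _ = k := Nat.div_mul_cancel hke.two_dvd
    · rw [finsum_incidence, ← Finset.mul_sum, ← finsum_incidence, hfs v,
        Nat.div_mul_cancel hke.two_dvd]
end

section
/- Let k ≥ 1 be an integer and let G be a finite graph that contains a perfect k-matching. Then for every subset S of V(G), the number of isolated vertices of G − S is at most |S|. -/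
/-- `i(G - S)`: the number of isolated vertices of the subgraph of `G` induced on the
complement of `S`, i.e. the number of vertices outside `S` all of whose neighbours lie in `S`. -/
noncomputable def SimpleGraph.isoCount {V : Type*} (G : SimpleGraph V) (S : Set V) : ℕ :=
  Nat.card {v : V // v ∉ S ∧ ∀ w, G.Adj v w → w ∈ S}

private lemma sum_biUnion_le' {α β : Type*} [DecidableEq β] (s : Finset α)
    (A : α → Finset β) (f : β → ℕ) :
    ∑ e ∈ s.biUnion A, f e ≤ ∑ v ∈ s, ∑ e ∈ A v, f e := by
  classical
  induction s using Finset.induction with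
  | empty => simp
  | @insert a s hx ih =>
    rw [Finset.biUnion_insert, Finset.sum_insert hx]
    calc ∑ e ∈ A a ∪ s.biUnion A, f e
        ≤ ∑ e ∈ A a, f e + ∑ e ∈ s.biUnion A, f e := by
          have := Finset.sum_union_inter (s₁ := A a) (s₂ := s.biUnion A) (f := f)
          omega
      _ ≤ _ := by exact Nat.add_le_add_left ih _

/-- Let `k ≥ 1` be an integer and let `G` be a finite graph that contains a perfect
`k`-matching. Then for every subset `S` of `V(G)`, the number of isolated vertices of `G - S`
is at most `|S|`. -/
theorem isoCount_le_of_perfect_k_matching {V : Type*} [Fintype V]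
    (G : SimpleGraph V) (k : ℕ) (hk : 1 ≤ k) (h : ∃ f, G.IsPerfectNMatching k f) :
    ∀ S : Set V, G.isoCount S ≤ S.ncard := by
  classical
  intro S
  obtain ⟨f, hedge, hle, hsum⟩ := h
  set I : Set V := {v | v ∉ S ∧ ∀ w, G.Adj v w → w ∈ S} with hI
  have hiso : G.isoCount S = I.ncard := rfl
  set It : Finset V := (Set.toFinite I).toFinset with hIt
  set St : Finset V := (Set.toFinite S).toFinset with hSt
  have hIcard : I.ncard = It.card := Set.ncard_eq_toFinset_card I (Set.toFinite I)
  have hScard : S.ncard = St.card := Set.ncard_eq_toFinset_card S (Set.toFinite S)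
  set A : V → Finset (Sym2 V) := fun v => (Set.toFinite (G.incidenceSet v)).toFinset with hA
  have hAmem : ∀ v e, e ∈ A v ↔ e ∈ G.edgeSet ∧ v ∈ e := by
    intro v e
    simp [hA, Set.Finite.mem_toFinset, SimpleGraph.incidenceSet]
  have hsum' : ∀ v, ∑ e ∈ A v, f e = k := by
    intro v
    have := hsum v
    rwa [← (Set.toFinite (G.incidenceSet v)).coe_toFinset, finsum_mem_coe_finset] at this
  -- disjointness of incidence sets of isolated vertices
  have hdisj : ∀ v ∈ It, ∀ w ∈ It, v ≠ w → Disjoint (A v) (A w) := by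
    intro v hv w hw hvw
    rw [Finset.disjoint_left]
    intro e hev hew
    rw [hAmem] at hev hew
    have he : e = s(v, w) := (Sym2.mem_and_mem_iff hvw).mp ⟨hev.2, hew.2⟩
    have hadj : G.Adj v w := by rw [← SimpleGraph.mem_edgeSet, ← he]; exact hev.1
    rw [hIt, Set.Finite.mem_toFinset] at hv hw
    exact hw.1 (hv.2 w hadj)
  have key1 : k * It.card = ∑ e ∈ It.biUnion A, f e := by
    rw [Finset.sum_biUnion hdisj]
    simp [hsum', mul_comm]
  -- every edge incident to an isolated vertex is incident to a vertex of S
  have hsub : It.biUnion A ⊆ St.biUnion A := by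
    intro e he
    rw [Finset.mem_biUnion] at he ⊢
    obtain ⟨v, hv, hev⟩ := he
    rw [hAmem] at hev
    obtain ⟨hes, hve⟩ := hev
    have hadj : G.Adj v (Sym2.Mem.other hve) := by
      rw [← SimpleGraph.mem_edgeSet, Sym2.other_spec hve]; exact hes
    rw [hIt, Set.Finite.mem_toFinset] at hv
    refine ⟨Sym2.Mem.other hve, ?_, ?_⟩
    · rw [hSt, Set.Finite.mem_toFinset]; exact hv.2 _ hadj
    · rw [hAmem]; exact ⟨hes, Sym2.other_mem hve⟩
  have key2 : ∑ e ∈ St.biUnion A, f e ≤ k * St.card := by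
    calc ∑ e ∈ St.biUnion A, f e ≤ ∑ s ∈ St, ∑ e ∈ A s, f e := sum_biUnion_le' St A f
      _ = k * St.card := by simp [hsum', mul_comm]
  have : k * It.card ≤ k * St.card := by
    rw [key1]
    exact le_trans (Finset.sum_le_sum_of_subset hsub) key2
  rw [hiso, hIcard, hScard]
  exact Nat.le_of_mul_le_mul_left this hk
end

section
/- Let k ≥ 2 be an even integer. A finite graph G contains a perfect k-matching if and only if for every subset S of V(G), the number of isolated vertices of G − S is at most |S|. -/
/-
`f` is a perfect `k`-matching iff it is supported on edges, bounded by `k`, and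
`∑ w, f s(v, w) = k` at every vertex `v`. Summing this over the isolated vertices of `G - S`,
whose weighted edges all end in `S`, gives `k · i(G - S) ≤ k · |S|`.

Conversely, for a finite set `A` of vertices with neighbourhood `N(A)`, the vertices of `A \ N(A)`
are isolated in `G - (N(A) \ A)`, so the condition yields Hall's condition `|A| ≤ |N(A)|`.
Hence there is a permutation `σ` with `v ~ σ v` for all `v`. Giving each edge `{a, b}` the weight
`k/2` for each of `σ a = b` and `σ b = a` that holds, each vertex `v` receives `k/2` from `σ v`
and `k/2` from `σ⁻¹ v`, so evenness of `k` is exactly what is needed.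
-/

open Finset

namespace SimpleGraph

variable {V : Type*} {G : SimpleGraph V}

lemma finsum_incidenceSet_eq_sum [Fintype V] {M : Type*} [AddCommMonoid M] {f : Sym2 V → M}
    (hf : ∀ e, f e ≠ 0 → e ∈ G.edgeSet) (v : V) :
    ∑ᶠ e ∈ G.incidenceSet v, f e = ∑ w, f s(v, w) := by
  classical
  have himage : G.incidenceSet v = (fun w => s(v, w)) '' G.neighborSet v := by
    refine Set.ext fun e => ⟨fun he => ?_, ?_⟩
    · exact ⟨_, G.incidence_other_prop he, Sym2.other_spec' he.2⟩
    · rintro ⟨w, hw, rfl⟩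
      exact G.mem_incidence_iff_neighbor.mpr hw
  have hsupport : Function.support (fun w => f s(v, w)) ⊆ G.neighborSet v :=
    fun w hw => hf _ hw
  rw [himage, finsum_mem_image (fun _ _ _ _ h => Sym2.congr_right.mp h),
    ← finsum_mem_inter_support, Set.inter_eq_right.mpr hsupport, finsum_mem_support,
    finsum_eq_sum_of_fintype]

lemma isoCount_eq_ncard (S : Set V) :
    G.isoCount S = {v | v ∉ S ∧ ∀ w, G.Adj v w → w ∈ S}.ncard :=
  Nat.card_coe_set_eq _

theorem IsPerfectNMatching.isoCount_le [Fintype V] {k : ℕ} {f : Sym2 V → ℕ}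
    (hf : G.IsPerfectNMatching k f) (hk : k ≠ 0) (S : Set V) : G.isoCount S ≤ S.ncard := by
  classical
  obtain ⟨hsupp, -, hsum⟩ := hf
  have hvertex (v : V) : ∑ w, f s(v, w) = k :=
    (finsum_incidenceSet_eq_sum hsupp v).symm.trans (hsum v)
  set I := {v | v ∉ S ∧ ∀ w, G.Adj v w → w ∈ S}.toFinset
  rw [isoCount_eq_ncard, Set.ncard_eq_toFinset_card', Set.ncard_eq_toFinset_card']
  refine Nat.le_of_mul_le_mul_left ?_ (Nat.pos_of_ne_zero hk)
  calc k * #I = ∑ v ∈ I, ∑ w, f s(v, w) := by simp [hvertex, mul_comm]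
    _ = ∑ v ∈ I, ∑ w ∈ S.toFinset, f s(v, w) := by
      refine sum_congr rfl fun v hv => (sum_subset (subset_univ _) fun w _ hw => ?_).symm
      by_contra hne
      simp only [I, Set.mem_toFinset, Set.mem_ofPred_eq] at hv hw
      exact hw (hv.2 w (hsupp _ hne))
    _ ≤ ∑ v, ∑ w ∈ S.toFinset, f s(v, w) := sum_le_sum_of_subset (subset_univ _)
    _ = ∑ w ∈ S.toFinset, ∑ v, f s(w, v) := by
      rw [sum_comm]
      exact sum_congr rfl fun w _ => sum_congr rfl fun v _ => congrArg f Sym2.eq_swap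
    _ = k * #S.toFinset := by simp [hvertex, mul_comm]

lemma card_sdiff_le_isoCount_sdiff [Finite V] [DecidableEq V] {A N : Finset V}
    (hN : ∀ a ∈ A, ∀ w, G.Adj a w → w ∈ N) : #(A \ N) ≤ G.isoCount ↑(N \ A) := by
  rw [isoCount_eq_ncard, ← Set.ncard_coe_finset]
  refine Set.ncard_le_ncard (fun v hv => ?_) (Set.toFinite _)
  simp only [coe_sdiff, Set.mem_sdiff, mem_coe, Set.mem_ofPred_eq] at hv ⊢
  exact ⟨fun h => hv.2 h.1,
    fun w hw => ⟨hN v hv.1 w hw, fun hwA => hv.2 (hN w hwA v hw.symm)⟩⟩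

lemma card_le_card_biUnion_neighborFinset [Fintype V] [DecidableEq V] [DecidableRel G.Adj]
    (h : ∀ S, G.isoCount S ≤ S.ncard) (A : Finset V) :
    #A ≤ #(A.biUnion fun v => G.neighborFinset v) := by
  set N := A.biUnion fun v => G.neighborFinset v
  have hsdiff : #(A \ N) ≤ #(N \ A) := by
    refine (card_sdiff_le_isoCount_sdiff fun a ha w hw => ?_).trans
      ((h _).trans_eq (Set.ncard_coe_finset _))
    exact mem_biUnion.mpr ⟨a, ha, (G.mem_neighborFinset a w).mpr hw⟩
  have := card_inter_add_card_sdiff A N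
  have := card_inter_add_card_sdiff N A
  rw [inter_comm] at this
  omega

lemma exists_perm_adj_of_isoCount_le [Fintype V] (h : ∀ S, G.isoCount S ≤ S.ncard) :
    ∃ σ : Equiv.Perm V, ∀ v, G.Adj v (σ v) := by
  classical
  obtain ⟨g, hinj, hadj⟩ :=
    (all_card_le_biUnion_card_iff_exists_injective fun v => G.neighborFinset v).mp
      (card_le_card_biUnion_neighborFinset h)
  exact ⟨Equiv.ofBijective g (Finite.injective_iff_bijective.mp hinj),
    fun v => (G.mem_neighborFinset v (g v)).mp (hadj v)⟩

theorem exists_isPerfectNMatching_of_perm [Fintype V] (σ : Equiv.Perm V)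
    (hσ : ∀ v, G.Adj v (σ v)) (m : ℕ) : ∃ f, G.IsPerfectNMatching (m + m) f := by
  classical
  let f : Sym2 V → ℕ :=
    Sym2.lift ⟨fun a b => (if σ a = b then m else 0) + (if σ b = a then m else 0),
      fun _ _ => add_comm _ _⟩
  have hsupp : ∀ e, f e ≠ 0 → e ∈ G.edgeSet := by
    intro e
    induction e with
    | h a b =>
      simp only [f, Sym2.lift_mk, mem_edgeSet]
      intro hne
      by_cases hab : σ a = b
      · exact hab ▸ hσ a
      by_cases hba : σ b = a
      · exact (hba ▸ hσ b).symm
      simp [hab, hba] at hne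
  refine ⟨f, hsupp, fun e => ?_, fun v => ?_⟩
  · induction e with
    | h a b => simp only [f, Sym2.lift_mk]; split_ifs <;> omega
  · rw [finsum_incidenceSet_eq_sum hsupp]
    have hpreimage : ∑ w, (if σ w = v then m else 0) = m := by
      rw [Equiv.sum_comp σ fun x => if x = v then m else 0, sum_ite_eq', if_pos (mem_univ v)]
    simp only [f, Sym2.lift_mk, sum_add_distrib, hpreimage, sum_ite_eq, if_pos (mem_univ _)]

end SimpleGraph

/-- Let `k ≥ 2` be an even integer. A finite graph `G` contains a perfect `k`-matching if and
only if for every subset `S` of `V(G)`, the number of isolated vertices of `G - S` is at most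
`|S|`. -/
theorem perfect_k_matching_iff_isoCount_le {V : Type*} [Fintype V]
    (G : SimpleGraph V) (k : ℕ) (hk : 2 ≤ k) (hke : Even k) :
    (∃ f, G.IsPerfectNMatching k f) ↔ ∀ S : Set V, G.isoCount S ≤ S.ncard := by
  refine ⟨fun ⟨f, hf⟩ => hf.isoCount_le (by omega), fun h => ?_⟩
  obtain ⟨σ, hσ⟩ := G.exists_perm_adj_of_isoCount_le h
  obtain ⟨m, rfl⟩ := hke
  exact G.exists_isPerfectNMatching_of_perm σ hσ m
end
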